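/- Assume Hypothesis (H). Then for every two-fold automorphism (σ₁, σ₂) of Γ and every x ∈ ℤ/nℤ: σ₁(x + m) = σ₁(x) + m. In other words, the cosets of the subgroup L = {0, m} form a block system of ℤ/nℤ with respect to the group of first coordinates of two-fold automorphisms of Γ. -/

import Mathlib

open SimpleGraph

/-- The tensor product of a simple graph with `K₂`, on vertex set `V × ZMod 2`. -/
def tensorK2 {V : Type*} (Γ : SimpleGraph V) : SimpleGraph (V × ZMod 2) where
  Adj p q := Γ.Adj p.1 q.1 ∧ p.2 ≠ q.2
  symm := by
    refine ⟨fun p q h => ?_⟩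
    exact ⟨h.1.symm, h.2.symm⟩
  loopless := by
    refine ⟨fun p h => ?_⟩
    exact h.2 rfl

/-- A graph `Γ` is stable if every automorphism of `Γ × K₂` is of the expected form
`(v,i) ↦ (σ v, i + ε)`. -/
def IsStable {V : Type*} (Γ : SimpleGraph V) : Prop :=
  ∀ φ : tensorK2 Γ ≃g tensorK2 Γ, ∃ σ : Γ ≃g Γ, ∃ ε : ZMod 2,
    ∀ p : V × ZMod 2, φ p = (σ p.1, p.2 + ε)

/-- A pair of permutations `(σ₁, σ₂)` is a two-fold automorphism of `Γ` iff adjacency of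
`v, w` is equivalent to adjacency of `σ₁ v, σ₂ w`. -/
def IsTwoFoldAuto {V : Type*} (Γ : SimpleGraph V) (σ₁ σ₂ : Equiv.Perm V) : Prop :=
  ∀ v w : V, Γ.Adj v w ↔ Γ.Adj (σ₁ v) (σ₂ w)

section Aux

variable {m : ℕ} {S : Set (ZMod (2 * m))}

/-- The shift automorphism `(x, i) ↦ (x + a, i + ε)` of `Γ × K₂` for a circulant `Γ`. -/
def shiftIso (S : Set (ZMod (2 * m))) (a : ZMod (2 * m)) (ε : ZMod 2) :
    tensorK2 (circulantGraph S) ≃g tensorK2 (circulantGraph S) :=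
  { toEquiv :=
      { toFun := fun p => (p.1 + a, p.2 + ε)
        invFun := fun p => (p.1 - a, p.2 - ε)
        left_inv := fun p => by simp
        right_inv := fun p => by simp }
    map_rel_iff' := by
      rintro ⟨u, i⟩ ⟨v, j⟩
      show (circulantGraph S).Adj (u + a) (v + a) ∧ i + ε ≠ j + ε ↔
        (circulantGraph S).Adj u v ∧ i ≠ j
      simp [circulantGraph_adj_translate] }

@[simp] lemma shiftIso_apply (a : ZMod (2 * m)) (ε : ZMod 2) (p : ZMod (2 * m) × ZMod 2) :
    shiftIso S a ε p = (p.1 + a, p.2 + ε) := rfl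

/-- The stabilizer of `(0,0)` permutes the pair `{(0,1), (m,1)}`. -/
theorem stabPair
    (horb : {p : ZMod (2 * m) × ZMod 2 |
        ∃ φ : tensorK2 (circulantGraph S) ≃g tensorK2 (circulantGraph S),
          φ (0, 0) = (0, 0) ∧ φ (0, 1) = p} =
      {((0 : ZMod (2 * m)), (1 : ZMod 2)), ((m : ZMod (2 * m)), (1 : ZMod 2))})
    (Ψ : tensorK2 (circulantGraph S) ≃g tensorK2 (circulantGraph S))
    (h0 : Ψ (0, 0) = (0, 0)) :
    (Ψ (0, 1) = (0, 1) ∨ Ψ (0, 1) = ((m : ZMod (2 * m)), 1)) ∧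
    (Ψ ((m : ZMod (2 * m)), 1) = (0, 1) ∨
      Ψ ((m : ZMod (2 * m)), 1) = ((m : ZMod (2 * m)), 1)) := by
  have key : ∀ q : ZMod (2 * m) × ZMod 2,
      (∃ φ : tensorK2 (circulantGraph S) ≃g tensorK2 (circulantGraph S),
        φ (0, 0) = (0, 0) ∧ φ (0, 1) = q) →
      q = (0, 1) ∨ q = ((m : ZMod (2 * m)), 1) := by
    intro q hq
    have hq' : q ∈ {p : ZMod (2 * m) × ZMod 2 |
        ∃ φ : tensorK2 (circulantGraph S) ≃g tensorK2 (circulantGraph S),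
          φ (0, 0) = (0, 0) ∧ φ (0, 1) = p} := hq
    rw [horb] at hq'
    simpa [Set.mem_insert_iff] using hq'
  have hm1 : ∃ φ : tensorK2 (circulantGraph S) ≃g tensorK2 (circulantGraph S),
      φ (0, 0) = (0, 0) ∧ φ (0, 1) = ((m : ZMod (2 * m)), 1) := by
    have : ((m : ZMod (2 * m)), (1 : ZMod 2)) ∈ {p : ZMod (2 * m) × ZMod 2 |
        ∃ φ : tensorK2 (circulantGraph S) ≃g tensorK2 (circulantGraph S),
          φ (0, 0) = (0, 0) ∧ φ (0, 1) = p} := by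
      rw [horb]; simp
    exact this
  obtain ⟨φ₀, hφa, hφb⟩ := hm1
  refine ⟨key _ ⟨Ψ, h0, rfl⟩, key _ ⟨φ₀.trans Ψ, ?_, ?_⟩⟩
  · show Ψ (φ₀ (0, 0)) = (0, 0)
    rw [hφa, h0]
  · show Ψ (φ₀ (0, 1)) = Ψ ((m : ZMod (2 * m)), 1)
    rw [hφb]

/-- Every automorphism maps the pair above `(x,i)` into the pair above its image. -/
theorem pairOrbit
    (horb : {p : ZMod (2 * m) × ZMod 2 |
        ∃ φ : tensorK2 (circulantGraph S) ≃g tensorK2 (circulantGraph S),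
          φ (0, 0) = (0, 0) ∧ φ (0, 1) = p} =
      {((0 : ZMod (2 * m)), (1 : ZMod 2)), ((m : ZMod (2 * m)), (1 : ZMod 2))})
    (Φ : tensorK2 (circulantGraph S) ≃g tensorK2 (circulantGraph S))
    (x y : ZMod (2 * m)) (i j : ZMod 2) (hval : Φ (x, i) = (y, j)) :
    (Φ (x, i + 1) = (y, j + 1) ∨ Φ (x, i + 1) = (y + m, j + 1)) ∧
    (Φ (x + m, i + 1) = (y, j + 1) ∨ Φ (x + m, i + 1) = (y + m, j + 1)) := by
  set Ψ : tensorK2 (circulantGraph S) ≃g tensorK2 (circulantGraph S) :=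
    ((shiftIso S x i).trans Φ).trans (shiftIso S (-y) (-j)) with hΨ
  have g00 : shiftIso S x i ((0 : ZMod (2 * m)), (0 : ZMod 2)) = (x, i) := by
    rw [shiftIso_apply]; simp
  have g01 : shiftIso S x i ((0 : ZMod (2 * m)), (1 : ZMod 2)) = (x, i + 1) := by
    rw [shiftIso_apply]; simp [add_comm]
  have gm1 : shiftIso S x i ((m : ZMod (2 * m)), (1 : ZMod 2)) = (x + m, i + 1) := by
    rw [shiftIso_apply]; simp [add_comm]
  have hΨ0 : Ψ (0, 0) = (0, 0) := by
    show shiftIso S (-y) (-j) (Φ (shiftIso S x i (0, 0))) = (0, 0)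
    rw [g00, hval, shiftIso_apply]
    simp
    exact (by decide : ∀ a : ZMod 2, a + a = 0) j
  obtain ⟨h1, h2⟩ := stabPair horb Ψ hΨ0
  have e1 : Ψ (0, 1) = ((Φ (x, i + 1)).1 + -y, (Φ (x, i + 1)).2 + -j) := by
    show shiftIso S (-y) (-j) (Φ (shiftIso S x i (0, 1))) = _
    rw [g01, shiftIso_apply]
  have e2 : Ψ ((m : ZMod (2 * m)), 1) =
      ((Φ (x + m, i + 1)).1 + -y, (Φ (x + m, i + 1)).2 + -j) := by
    show shiftIso S (-y) (-j) (Φ (shiftIso S x i ((m : ZMod (2 * m)), 1))) = _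
    rw [gm1, shiftIso_apply]
  rw [e1] at h1
  rw [e2] at h2
  constructor
  · rcases h1 with h | h <;> [left; right] <;>
    · obtain ⟨ha, hb⟩ := Prod.mk.injEq .. ▸ h
      refine Prod.ext ?_ ?_ <;> simp only []
      · linear_combination ha
      · linear_combination hb
  · rcases h2 with h | h <;> [left; right] <;>
    · obtain ⟨ha, hb⟩ := Prod.mk.injEq .. ▸ h
      refine Prod.ext ?_ ?_ <;> simp only []
      · linear_combination ha
      · linear_combination hb

/-- Every automorphism of `Γ × K₂` shifts `(m, 0)`-translates coherently. -/
theorem pairBlock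
    (horb : {p : ZMod (2 * m) × ZMod 2 |
        ∃ φ : tensorK2 (circulantGraph S) ≃g tensorK2 (circulantGraph S),
          φ (0, 0) = (0, 0) ∧ φ (0, 1) = p} =
      {((0 : ZMod (2 * m)), (1 : ZMod 2)), ((m : ZMod (2 * m)), (1 : ZMod 2))})
    (hm0 : (m : ZMod (2 * m)) ≠ 0)
    (Φ : tensorK2 (circulantGraph S) ≃g tensorK2 (circulantGraph S))
    (x y : ZMod (2 * m)) (i j : ZMod 2) (hval : Φ (x, i) = (y, j)) :
    Φ (x + m, i) = (y + m, j) := by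
  have two : ∀ a : ZMod 2, a + 1 + 1 = a := by decide
  have h2m : (m : ZMod (2 * m)) + m = 0 := by
    have h := ZMod.natCast_self (2 * m)
    push_cast at h
    linear_combination h
  have hinj : ∀ z : ZMod (2 * m), ∀ k : ZMod 2, Φ (x + m, k) ≠ Φ (x, k) := by
    intro z k h
    have := Φ.injective h
    have hx : x + m = x := congrArg Prod.fst this
    exact hm0 (by linear_combination hx)
  obtain ⟨h1, -⟩ := pairOrbit horb Φ x y i j hval
  rcases h1 with h | h
  · obtain ⟨-, h2⟩ := pairOrbit horb Φ x y (i + 1) (j + 1) h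
    rw [two i, two j] at h2
    rcases h2 with h' | h'
    · exact absurd (h'.trans hval.symm) (hinj 0 i)
    · exact h'
  · obtain ⟨-, h2⟩ := pairOrbit horb Φ x (y + m) (i + 1) (j + 1) h
    rw [two i, two j] at h2
    rcases h2 with h' | h'
    · exact h'
    · exfalso
      have hy : y + m + m = y := by linear_combination h2m
      rw [hy] at h'
      exact hinj 0 i (h'.trans hval.symm)

end Aux

/-- Under Hypothesis (H) — `n = 2m` with `m > 1` odd, `Γ = Cay(ℤ/nℤ, S)` connected,
non-bipartite, reduced and unstable, and the orbit of `(0,1)` under the stabilizer of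
`(0,0)` in `Aut(Γ × K₂)` equal to `{(0,1),(m,1)}` — the cosets of `L = {0, m}` form a
block system for first coordinates of two-fold automorphisms: `σ₁(x + m) = σ₁(x) + m`. -/
theorem twoFoldAuto_first_coordinate_preserves_L_cosets
    (m : ℕ) (hm : 1 < m) (hodd : Odd m)
    (S : Set (ZMod (2 * m))) (hSsymm : ∀ s, s ∈ S ↔ -s ∈ S)
    (hS0 : (0 : ZMod (2 * m)) ∉ S)
    (hconn : (circulantGraph S).Connected)
    (hnbip : ¬ (circulantGraph S).Colorable 2)
    (hred : ∀ v w : ZMod (2 * m),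
      (circulantGraph S).neighborSet v = (circulantGraph S).neighborSet w → v = w)
    (hunst : ¬ IsStable (circulantGraph S))
    (horb : {p : ZMod (2 * m) × ZMod 2 |
        ∃ φ : tensorK2 (circulantGraph S) ≃g tensorK2 (circulantGraph S),
          φ (0, 0) = (0, 0) ∧ φ (0, 1) = p} =
      {((0 : ZMod (2 * m)), (1 : ZMod 2)), ((m : ZMod (2 * m)), (1 : ZMod 2))}) :
    ∀ σ₁ σ₂ : Equiv.Perm (ZMod (2 * m)), IsTwoFoldAuto (circulantGraph S) σ₁ σ₂ →
      ∀ x : ZMod (2 * m), σ₁ (x + (m : ZMod (2 * m))) = σ₁ x + (m : ZMod (2 * m)) := by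
  intro σ₁ σ₂ htfa x
  have hm0 : (m : ZMod (2 * m)) ≠ 0 := by
    haveI : NeZero (2 * m) := ⟨by omega⟩
    intro h
    rw [ZMod.natCast_eq_zero_iff] at h
    have := Nat.le_of_dvd (by omega) h
    omega
  have hadj : ∀ v w, (circulantGraph S).Adj v w ↔
      (circulantGraph S).Adj (σ₂ v) (σ₁ w) := by
    intro v w
    rw [adj_comm, htfa w v, adj_comm]
  have h01 : ∀ a : ZMod 2, a = 0 ∨ a = 1 := by decide
  let Φ : tensorK2 (circulantGraph S) ≃g tensorK2 (circulantGraph S) :=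
    { toEquiv :=
        { toFun := fun p => (if p.2 = 0 then σ₁ p.1 else σ₂ p.1, p.2)
          invFun := fun p => (if p.2 = 0 then σ₁.symm p.1 else σ₂.symm p.1, p.2)
          left_inv := by
            rintro ⟨v, i⟩
            by_cases h : i = 0 <;> simp [h]
          right_inv := by
            rintro ⟨v, i⟩
            by_cases h : i = 0 <;> simp [h] }
      map_rel_iff' := by
        rintro ⟨v, i⟩ ⟨w, j⟩
        show (circulantGraph S).Adj (if i = 0 then σ₁ v else σ₂ v)
            (if j = 0 then σ₁ w else σ₂ w) ∧ i ≠ j ↔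
          (circulantGraph S).Adj v w ∧ i ≠ j
        refine and_congr_left fun hij => ?_
        rcases h01 i with hi | hi <;> rcases h01 j with hj | hj <;>
          subst hi <;> subst hj
        · exact absurd rfl hij
        · simpa using (htfa v w).symm
        · simpa using (hadj v w).symm
        · exact absurd rfl hij }
  have hval : Φ (x, 0) = (σ₁ x, 0) := by
    show ((if (0 : ZMod 2) = 0 then σ₁ x else σ₂ x), (0 : ZMod 2)) = _
    simp
  have := pairBlock horb hm0 Φ x (σ₁ x) 0 0 hval
  have hL : Φ (x + m, 0) = (σ₁ (x + m), 0) := by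
    show ((if (0 : ZMod 2) = 0 then σ₁ (x + m) else σ₂ (x + m)), (0 : ZMod 2)) = _
    simp
  rw [hL] at this
  exact congrArg Prod.fst this
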